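/- Let G be a triangle-free normal plane map. Then G contains a path v1v2v3 with deg(v2)=3 and deg(v1) ≤ 5, deg(v3) ≤ 6, or a path v1v2v3 with deg(v2) ≤ 4 and deg(v1) = deg(v3) = 3. -/

import Mathlib

open SimpleGraph

/-- A combinatorial (oriented, 2-cell) embedding of a simple graph, given by a
rotation-style successor permutation on darts whose cycles are exactly the sets
of darts leaving a common vertex.  Faces are the cycles of the permutation
`d ↦ next d.symm`. -/
structure PlaneEmbedding {V : Type} (G : SimpleGraph V) where
  next : Equiv.Perm G.Dart
  next_fst : ∀ d : G.Dart, (next d).fst = d.fst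
  cycle_of_fst : ∀ d d' : G.Dart, d.fst = d'.fst → next.SameCycle d d'

namespace PlaneEmbedding

variable {V : Type} {G : SimpleGraph V} (E : PlaneEmbedding G)

/-- The face permutation on darts. -/
def facePerm : Equiv.Perm G.Dart :=
  (Function.Involutive.toPerm Dart.symm fun d => Dart.symm_symm d).trans E.next

/-- The setoid on darts identifying darts lying on the same face. -/
def faceSetoid : Setoid G.Dart :=
  ⟨E.facePerm.SameCycle, ⟨fun _ => Equiv.Perm.SameCycle.refl _ _,
    Equiv.Perm.SameCycle.symm, Equiv.Perm.SameCycle.trans⟩⟩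

/-- The number of faces of the embedding. -/
noncomputable def faceCount : ℕ := Nat.card (Quotient E.faceSetoid)

/-- The size (degree) of the face containing the dart `d`. -/
noncomputable def faceSize (d : G.Dart) : ℕ :=
  Nat.card {d' : G.Dart // E.facePerm.SameCycle d d'}

/-- Euler's formula `|V| - |E| + |F| = 2`: the embedding is in the plane. -/
def EulerFormula : Prop :=
  (Nat.card V : ℤ) - Nat.card G.edgeSet + E.faceCount = 2

end PlaneEmbedding

/-!
Discharging. Suppose neither path exists. Give every vertex `v` the charge `42 (deg v - 4)` and
every face `f` the charge `42 (|f| - 4)`; by Euler's formula the total is `-336`. Every vertex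
of degree `n ≥ 5` sends `rate n` to each neighbour of degree `3`. A `3`-vertex `v` whose face
corner `u v x` has `deg u ≤ 4` and `deg x = 7` gets `3` more: from the face if `|f| ≥ 5`;
otherwise `f` is a `4`-face `u v x s` (there are no triangles), `deg s ≥ 4` because there is no
`(3,4⁻,3)`-path `v u s`, and `3` comes from `s` if `deg s ≥ 5` and from `x` if `deg s = 4`.
As there is no `(5⁻,3,6⁻)`-path, a `3`-vertex with a neighbour of degree at most `5` has two
neighbours of degree at least `7`, and one checks that all final charges are nonnegative.
-/

open Finset

theorem Equiv.Perm.pow_card_sameCycle_apply {α : Type*} [Fintype α] [DecidableEq α]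
    (f : Equiv.Perm α) (x : α) : (f ^ Nat.card {y // f.SameCycle x y}) x = x := by
  by_cases hx : f x = x
  · exact Equiv.Perm.pow_apply_eq_self_of_apply_eq_self hx _
  · have hcard : Nat.card {y // f.SameCycle x y} = #(f.cycleOf x).support := by
      rw [Nat.card_eq_fintype_card, Fintype.card_subtype]
      congr 1
      ext y
      rw [mem_filter, Equiv.Perm.mem_support_cycleOf_iff, Equiv.Perm.mem_support]
      exact ⟨fun h => ⟨h.2, hx⟩, fun h => ⟨mem_univ y, h.1⟩⟩
    have := f.pow_mod_card_support_cycleOf_self_apply (#(f.cycleOf x).support) x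
    rwa [Nat.mod_self, pow_zero, Equiv.Perm.one_apply, ← hcard, eq_comm] at this

theorem Setoid.sum_inv_card_rel {α : Type*} [Fintype α] (s : Setoid α) :
    ∑ a, (Nat.card {b // s.r a b} : ℚ)⁻¹ = Nat.card (Quotient s) := by
  classical
  rw [← Finset.sum_fiberwise univ (Quotient.mk s), Nat.card_eq_fintype_card,
    Fintype.card_eq_sum_ones, Nat.cast_sum]
  refine sum_congr rfl fun q _ => ?_
  obtain ⟨a₀, rfl⟩ := q.exists_rep
  have hclass : ∀ a ∈ ({a | Quotient.mk s a = ⟦a₀⟧} : Finset α),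
      Nat.card {b // s.r a b} = #{a | Quotient.mk s a = ⟦a₀⟧} := by
    intro a ha
    rw [Nat.card_eq_fintype_card, Fintype.card_subtype]
    congr 1
    ext b
    simp only [mem_filter, mem_univ, true_and] at ha ⊢
    rw [← ha, Quotient.eq]
    exact ⟨s.symm, s.symm⟩
  rw [sum_congr rfl fun a ha => by rw [hclass a ha], sum_const, nsmul_eq_mul, Nat.cast_one]
  refine mul_inv_cancel₀ (Nat.cast_ne_zero.mpr (card_ne_zero.mpr ⟨a₀, by simp⟩))

namespace PlaneEmbedding

variable {V : Type} {G : SimpleGraph V} (E : PlaneEmbedding G)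

-- The mirror image: its faces are those of `E` traversed backwards.
def reverse : PlaneEmbedding G where
  next := E.next⁻¹
  next_fst d := by simpa using (E.next_fst (E.next⁻¹ d)).symm
  cycle_of_fst d d' h := (E.cycle_of_fst d d' h).inv

lemma facePerm_apply (d : G.Dart) : E.facePerm d = E.next d.symm := rfl

@[simp] lemma facePerm_fst (d : G.Dart) : (E.facePerm d).fst = d.snd := E.next_fst d.symm

lemma reverse_facePerm : E.reverse.facePerm =
    Dart.symm_involutive.toPerm * E.facePerm⁻¹ * (Dart.symm_involutive.toPerm)⁻¹ := by
  refine Equiv.ext fun d => ?_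
  simp only [Equiv.Perm.mul_apply, Function.Involutive.toPerm_symm, Equiv.Perm.inv_def]
  rfl

lemma faceSize_reverse (d : G.Dart) : E.reverse.faceSize d = E.faceSize d.symm := by
  unfold faceSize
  rw [reverse_facePerm]
  refine Nat.card_congr (Dart.symm_involutive.toPerm.subtypeEquiv fun d' => ?_)
  rw [Equiv.Perm.sameCycle_conj, Equiv.Perm.sameCycle_inv]
  rfl

variable [Fintype V] [DecidableRel G.Adj]

-- The charge `|f| - 4` of a face `f` is spread evenly over its `|f|` darts.
theorem EulerFormula.sum_charge (hE : E.EulerFormula) :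
    ∑ v, ((G.degree v : ℚ) - 4) + ∑ d : G.Dart, (1 - 4 / (E.faceSize d : ℚ)) = -8 := by
  have hF : ∑ d, (E.faceSize d : ℚ)⁻¹ = E.faceCount := E.faceSetoid.sum_inv_card_rel
  have hV : ∑ v, (G.degree v : ℚ) = Fintype.card G.Dart := by
    exact_mod_cast (dart_card_eq_sum_degrees G).symm
  have hD : (Fintype.card G.Dart : ℚ) = 2 * #G.edgeFinset := by
    exact_mod_cast dart_card_eq_twice_card_edges G
  have hEuler : (Fintype.card V : ℚ) - #G.edgeFinset + E.faceCount = 2 := by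
    have := hE
    rw [EulerFormula, Nat.card_eq_fintype_card, Nat.card_eq_fintype_card,
      ← edgeFinset_card] at this
    exact_mod_cast this
  simp only [sum_sub_distrib, div_eq_mul_inv, ← mul_sum, hF, hV, sum_const, card_univ,
    nsmul_eq_mul]
  linarith

variable [DecidableEq V]

lemma next_ne_self {d : G.Dart} (h : 2 ≤ G.degree d.fst) : E.next d ≠ d := by
  intro hfix
  have hsub : ({e | e.fst = d.fst} : Finset G.Dart) ⊆ {d} := by
    intro e he
    obtain ⟨i, rfl⟩ := E.cycle_of_fst d e (mem_filter.mp he).2.symm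
    simp [Equiv.Perm.zpow_apply_eq_self_of_apply_eq_self hfix i]
  have := card_le_card hsub
  rw [dart_fst_fiber_card_eq_degree, card_singleton] at this
  omega

lemma next_next_ne_self {d : G.Dart} (h : 3 ≤ G.degree d.fst) : E.next (E.next d) ≠ d := by
  intro hper
  have hsub : ({e | e.fst = d.fst} : Finset G.Dart) ⊆ {d, E.next d} := by
    intro e he
    obtain ⟨i, rfl⟩ := E.cycle_of_fst d e (mem_filter.mp he).2.symm
    rcases Equiv.Perm.zpow_apply_eq_of_apply_apply_eq_self hper i with h | h <;> simp [h]
  have := (card_le_card hsub).trans (card_le_two : #{d, E.next d} ≤ 2)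
  rw [dart_fst_fiber_card_eq_degree] at this
  omega

lemma facePerm_pow_faceSize (d : G.Dart) : (E.facePerm ^ E.faceSize d) d = d :=
  E.facePerm.pow_card_sameCycle_apply d

lemma four_le_faceSize (htri : G.CliqueFree 3) {d : G.Dart} (h : 3 ≤ E.faceSize d) :
    4 ≤ E.faceSize d := by
  refine lt_of_le_of_ne h fun h3 => htri {d.fst, d.snd, (E.facePerm d).snd} ?_
  have hcyc := E.facePerm_pow_faceSize d
  rw [← h3, pow_succ, pow_succ, pow_one, Equiv.Perm.mul_apply, Equiv.Perm.mul_apply] at hcyc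
  have hca : G.Adj (E.facePerm d).snd d.fst := by
    have hsnd : (E.facePerm (E.facePerm d)).snd = d.fst := by rw [← facePerm_fst, hcyc]
    simpa [hsnd] using (E.facePerm (E.facePerm d)).adj
  exact is3Clique_triple_iff.mpr ⟨d.adj, hca.symm, by simpa using (E.facePerm d).adj⟩

end PlaneEmbedding

namespace Discharging

-- What an `n`-vertex sends to each `3`-neighbour. The values are tight for a `6`-, `7`- or
-- `8⁺`-vertex all of whose neighbours are `3`-vertices, and for `3`-vertices whose neighbours
-- have degrees `(6, 6, 6)` or `(5, 7, 7)`.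
def rate (n : ℕ) : ℚ :=
  if n ≤ 4 then 0 else if n = 5 then 6 else if n = 6 then 14 else if n = 7 then 18 else 21

lemma rate_nonneg (n : ℕ) : 0 ≤ rate n := by
  unfold rate; split_ifs <;> norm_num

lemma rate_eq_zero {n : ℕ} (h : n ≤ 4) : rate n = 0 := if_pos h

lemma rate_five : rate 5 = 6 := rfl

lemma fourteen_le_rate {n : ℕ} (h : 6 ≤ n) : 14 ≤ rate n := by
  unfold rate; split_ifs <;> first | omega | norm_num

lemma eighteen_le_rate {n : ℕ} (h : 7 ≤ n) : 18 ≤ rate n := by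
  unfold rate; split_ifs <;> first | omega | norm_num

lemma twenty_one_le_rate_add {n : ℕ} (h : 7 ≤ n) : 21 ≤ rate n + if n = 7 then 3 else 0 := by
  unfold rate; split_ifs <;> first | omega | norm_num

lemma rate_mul_add_le {n k : ℕ} (hn : 5 ≤ n) (hk : k ≤ n) :
    rate n * k + 6 * (n - k) ≤ 42 * ((n : ℚ) - 4) := by
  have hk' : (k : ℚ) ≤ n := by exact_mod_cast hk
  unfold rate
  split_ifs with h4 h5 h6 h7
  · omega
  · subst h5; push_cast at hk' ⊢; linarith
  · subst h6; push_cast at hk' ⊢; linarith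
  · subst h7; push_cast at hk' ⊢; linarith
  · have : (8 : ℚ) ≤ n := by exact_mod_cast (show 8 ≤ n by omega)
    linarith

variable {V : Type} [Fintype V] {G : SimpleGraph V} [DecidableRel G.Adj]

-- Sent by `e.fst` to `e.snd`.
noncomputable def baseGift (e : G.Dart) : ℚ :=
  if G.degree e.snd = 3 then rate (G.degree e.fst) else 0

lemma baseGift_nonneg (e : G.Dart) : 0 ≤ baseGift e := by
  unfold baseGift; split_ifs <;> simp [rate_nonneg]

end Discharging

namespace PlaneEmbedding

open Discharging

variable {V : Type} [Fintype V] {G : SimpleGraph V} [DecidableRel G.Adj]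
  (E : PlaneEmbedding G)

-- The face corner `u v x` with `d = (u, v)` and `x = (E.facePerm d).snd`.
def IsLightCorner (d : G.Dart) : Prop :=
  G.degree d.fst ≤ 4 ∧ G.degree d.snd = 3 ∧ G.degree (E.facePerm d).snd = 7

instance (d : G.Dart) : Decidable (E.IsLightCorner d) :=
  inferInstanceAs (Decidable (_ ∧ _ ∧ _))

-- The vertex opposite `d.snd` when the face of `d` is a `4`-face.
def opposite (d : G.Dart) : V := (E.facePerm (E.facePerm d)).snd

def payer (d : G.Dart) : V :=
  if 5 ≤ G.degree (E.opposite d) then E.opposite d else (E.facePerm d).snd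

noncomputable def faceGift (d : G.Dart) : ℚ :=
  if E.IsLightCorner d ∧ 5 ≤ E.faceSize d then 3 else 0

def IsVertexPaid (d : G.Dart) : Prop :=
  E.IsLightCorner d ∧ E.faceSize d = 4 ∧ 4 ≤ G.degree (E.opposite d)

noncomputable instance (d : G.Dart) : Decidable (E.IsVertexPaid d) :=
  inferInstanceAs (Decidable (_ ∧ _ ∧ _))

noncomputable def vertexGift (d : G.Dart) : ℚ :=
  if E.IsVertexPaid d then 3 else 0

-- Light corners of the other orientation are the light corners of `E.reverse`.
noncomputable def cornerGifts (d : G.Dart) : ℚ :=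
  E.faceGift d + E.vertexGift d + E.reverse.faceGift d + E.reverse.vertexGift d

lemma faceGift_nonneg (d : G.Dart) : 0 ≤ E.faceGift d := by
  unfold faceGift; split_ifs <;> norm_num

lemma vertexGift_nonneg (d : G.Dart) : 0 ≤ E.vertexGift d := by
  unfold vertexGift; split_ifs <;> norm_num

lemma cornerGifts_nonneg (d : G.Dart) : 0 ≤ E.cornerGifts d := by
  have := E.faceGift_nonneg d
  have := E.vertexGift_nonneg d
  have := E.reverse.faceGift_nonneg d
  have := E.reverse.vertexGift_nonneg d
  unfold cornerGifts
  linarith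

lemma faceGift_le (d : G.Dart) : E.faceGift d ≤ if 5 ≤ E.faceSize d then 3 else 0 := by
  unfold faceGift
  split_ifs with h h'
  · rfl
  · exact absurd h.2 h'
  all_goals norm_num

lemma five_le_degree_payer {d : G.Dart} (h : E.vertexGift d ≠ 0) :
    5 ≤ G.degree (E.payer d) := by
  unfold vertexGift at h
  split_ifs at h with hd
  · unfold payer
    by_cases h5 : 5 ≤ G.degree (E.opposite d)
    · rwa [if_pos h5]
    · rw [if_neg h5, hd.1.2.2]; norm_num
  · exact absurd rfl h

variable [DecidableEq V]

lemma opposite_ne_snd {d : G.Dart} (h : 2 ≤ G.degree (E.facePerm d).snd) :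
    E.opposite d ≠ d.snd := by
  intro heq
  refine E.next_ne_self (d := (E.facePerm d).symm) h ?_
  rw [← facePerm_apply, Dart.ext_iff, Prod.ext_iff]
  exact ⟨E.facePerm_fst _, heq.trans (E.facePerm_fst d).symm⟩

lemma adj_opposite_fst {d : G.Dart} (h : E.faceSize d = 4) : G.Adj (E.opposite d) d.fst := by
  have hcyc := E.facePerm_pow_faceSize d
  simp only [h, pow_succ, pow_zero, one_mul, Equiv.Perm.mul_apply] at hcyc
  have hsnd : (E.facePerm (E.facePerm (E.facePerm d))).snd = d.fst := by
    rw [← facePerm_fst, hcyc]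
  simpa [opposite, hsnd] using (E.facePerm (E.facePerm (E.facePerm d))).adj

lemma three_le_faceGift_add_vertexGift (hδ : ∀ v, 3 ≤ G.degree v)
    (hface : ∀ d : G.Dart, 3 ≤ E.faceSize d) (htri : G.CliqueFree 3)
    (h343 : ∀ u v w : V, G.Adj u v → G.Adj v w → u ≠ w →
      G.degree u = 3 → G.degree v ≤ 4 → G.degree w ≠ 3)
    {d : G.Dart} (hd : E.IsLightCorner d) : 3 ≤ E.faceGift d + E.vertexGift d := by
  obtain ⟨hfst, hsnd, hnext⟩ := hd
  rcases (E.four_le_faceSize htri (hface d)).eq_or_lt with h4 | h5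
  · have hopp : 4 ≤ G.degree (E.opposite d) := by
      have := h343 d.snd d.fst (E.opposite d) d.adj.symm (E.adj_opposite_fst h4.symm).symm
        (E.opposite_ne_snd (by omega)).symm hsnd hfst
      have := hδ (E.opposite d)
      omega
    have := E.faceGift_nonneg d
    rw [vertexGift, if_pos ⟨⟨hfst, hsnd, hnext⟩, h4.symm, hopp⟩]
    linarith
  · have := E.vertexGift_nonneg d
    rw [faceGift, if_pos ⟨⟨hfst, hsnd, hnext⟩, h5⟩]
    linarith

lemma card_vertexPaid_le (w : V) :
    #{d : G.Dart | E.payer d = w ∧ E.IsVertexPaid d} ≤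
      #{e : G.Dart | e.fst = w ∧ G.degree e.snd ≠ 3} := by
  -- a corner is charged to the dart from its payer to the `7`-vertex or to the opposite
  -- `4`-vertex; the two kinds of darts are told apart by the degree of their second vertex
  refine card_le_card_of_injOn
    (fun d => if 5 ≤ G.degree (E.opposite d) then (E.facePerm (E.facePerm d)).symm
      else E.facePerm (E.facePerm d)) ?_ ?_
  · rintro d hd
    rw [mem_coe, mem_filter] at hd ⊢
    simp only [mem_univ, true_and, payer] at hd ⊢
    obtain ⟨hpay, ⟨-, -, h7⟩, -, hopp⟩ := hd
    beta_reduce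
    by_cases h5 : 5 ≤ G.degree (E.opposite d)
    · rw [if_pos h5] at hpay ⊢
      refine ⟨hpay, ?_⟩
      change G.degree (E.facePerm (E.facePerm d)).fst ≠ 3
      rw [facePerm_fst, h7]
      norm_num
    · rw [if_neg h5] at hpay ⊢
      exact ⟨by simpa using hpay, by change G.degree (E.opposite d) ≠ 3; omega⟩
  · rintro d₁ hd₁ d₂ hd₂ heq
    rw [mem_coe, mem_filter] at hd₁ hd₂
    have hmixed : ∀ {a b : G.Dart}, E.IsVertexPaid a → ¬5 ≤ G.degree (E.opposite b) →
        (E.facePerm (E.facePerm a)).symm ≠ E.facePerm (E.facePerm b) := by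
      rintro a b ⟨⟨-, -, ha⟩, -⟩ hb h
      have hsnd := congrArg (fun e : G.Dart => e.snd) h
      simp only [Dart.symm_toProd, Prod.snd_swap, facePerm_fst] at hsnd
      change _ = E.opposite b at hsnd
      rw [← hsnd, ha] at hb
      norm_num at hb
    beta_reduce at heq
    split_ifs at heq with h₁ h₂ h₂
    · exact E.facePerm.injective (E.facePerm.injective (Dart.symm_involutive.injective heq))
    · exact absurd heq (hmixed hd₁.2.2 h₂)
    · exact absurd heq.symm (hmixed hd₂.2.2 h₁)
    · exact E.facePerm.injective (E.facePerm.injective heq)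

lemma sum_vertexGift_le (w : V) :
    ∑ d with E.payer d = w, E.vertexGift d ≤
      3 * #{e : G.Dart | e.fst = w ∧ G.degree e.snd ≠ 3} := by
  unfold vertexGift
  rw [← sum_filter, sum_const, nsmul_eq_mul, mul_comm, filter_filter]
  exact mul_le_mul_of_nonneg_left (by exact_mod_cast E.card_vertexPaid_le w) (by norm_num)

lemma bonus_add_bonus_le_cornerGifts (hδ : ∀ v, 3 ≤ G.degree v)
    (hface : ∀ d : G.Dart, 3 ≤ E.faceSize d) (htri : G.CliqueFree 3)
    (h343 : ∀ u v w : V, G.Adj u v → G.Adj v w → u ≠ w →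
      G.degree u = 3 → G.degree v ≤ 4 → G.degree w ≠ 3)
    {d : G.Dart} (hv : G.degree d.fst = 3) (ha : G.degree d.snd ≤ 4) :
    ((if G.degree (E.next d).snd = 7 then 3 else 0) +
      if G.degree (E.next⁻¹ d).snd = 7 then 3 else 0) ≤ E.cornerGifts d.symm := by
  have hface' : ∀ d : G.Dart, 3 ≤ E.reverse.faceSize d := fun d =>
    (E.faceSize_reverse d).symm ▸ hface d.symm
  have h₁ : (if G.degree (E.next d).snd = 7 then 3 else 0) ≤
      E.faceGift d.symm + E.vertexGift d.symm := by
    split_ifs with h7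
    · exact E.three_le_faceGift_add_vertexGift hδ hface htri h343 ⟨ha, hv, h7⟩
    · exact add_nonneg (E.faceGift_nonneg _) (E.vertexGift_nonneg _)
  have h₂ : (if G.degree (E.next⁻¹ d).snd = 7 then 3 else 0) ≤
      E.reverse.faceGift d.symm + E.reverse.vertexGift d.symm := by
    split_ifs with h7
    · exact E.reverse.three_le_faceGift_add_vertexGift hδ hface' htri h343 ⟨ha, hv, h7⟩
    · exact add_nonneg (E.reverse.faceGift_nonneg _) (E.reverse.vertexGift_nonneg _)
  unfold cornerGifts
  linarith

lemma faceGift_add_faceGift_reverse_le (hface : ∀ d : G.Dart, 3 ≤ E.faceSize d)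
    (htri : G.CliqueFree 3) (d : G.Dart) :
    E.faceGift d + E.reverse.faceGift d.symm ≤ 42 * (1 - 4 / (E.faceSize d : ℚ)) := by
  have h₁ := E.faceGift_le d
  have h₂ := E.reverse.faceGift_le d.symm
  rw [faceSize_reverse, Dart.symm_symm] at h₂
  have h4 := E.four_le_faceSize htri (hface d)
  split_ifs at h₁ h₂ with h5
  · have : (4 : ℚ) / E.faceSize d ≤ 4 / 5 :=
      div_le_div_of_nonneg_left (by norm_num) (by norm_num) (by exact_mod_cast h5)
    linarith
  · rw [show E.faceSize d = 4 by omega]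
    norm_num
    linarith

lemma sum_faceGift_le (hface : ∀ d : G.Dart, 3 ≤ E.faceSize d) (htri : G.CliqueFree 3) :
    ∑ d, (E.faceGift d + E.reverse.faceGift d) ≤
      42 * ∑ d, (1 - 4 / (E.faceSize d : ℚ)) := by
  rw [sum_add_distrib, ← Equiv.sum_comp Dart.symm_involutive.toPerm E.reverse.faceGift,
    ← sum_add_distrib, mul_sum]
  exact sum_le_sum fun d _ => E.faceGift_add_faceGift_reverse_le hface htri d

noncomputable def inflow (v : V) : ℚ :=
  ∑ d with d.snd = v, (baseGift d + E.cornerGifts d)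

noncomputable def outflow (w : V) : ℚ :=
  ∑ e : G.Dart with e.fst = w, baseGift e + ∑ d with E.payer d = w, E.vertexGift d +
    ∑ d with E.reverse.payer d = w, E.reverse.vertexGift d

lemma sum_inflow : ∑ v, E.inflow v =
    ∑ w, E.outflow w + ∑ d, (E.faceGift d + E.reverse.faceGift d) := by
  simp only [inflow, outflow, cornerGifts, sum_add_distrib, sum_fiberwise]
  ring

lemma inflow_nonneg (v : V) : 0 ≤ E.inflow v :=
  sum_nonneg fun d _ => add_nonneg (baseGift_nonneg d) (E.cornerGifts_nonneg d)

lemma rates_add_cornerGifts_le_inflow {d : G.Dart} (hd : G.degree d.fst = 3) :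
    rate (G.degree d.snd) + rate (G.degree (E.next d).snd) + rate (G.degree (E.next⁻¹ d).snd) +
      E.cornerGifts d.symm ≤ E.inflow d.fst := by
  have hne : E.next d ≠ d := E.next_ne_self (by omega)
  have hne' : E.next (E.next d) ≠ d := E.next_next_ne_self (by omega)
  have hsymm : Function.Injective (Dart.symm : G.Dart → G.Dart) := Dart.symm_involutive.injective
  have h₁ : d.symm ≠ (E.next d).symm := fun h => hne (hsymm h).symm
  have h₂ : d.symm ≠ (E.next⁻¹ d).symm := fun h =>
    hne ((congrArg E.next (hsymm h)).trans (E.next.apply_symm_apply d))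
  have h₃ : (E.next d).symm ≠ (E.next⁻¹ d).symm := fun h =>
    hne' ((congrArg E.next (hsymm h)).trans (E.next.apply_symm_apply d))
  have hsub : ({d.symm, (E.next d).symm, (E.next⁻¹ d).symm} : Finset G.Dart) ⊆
      ({e | e.snd = d.fst} : Finset G.Dart) := by
    simp only [insert_subset_iff, singleton_subset_iff, mem_filter, mem_univ, true_and]
    exact ⟨rfl, E.next_fst d, E.reverse.next_fst d⟩
  have hbase : ∀ e : G.Dart, e.fst = d.fst → baseGift e.symm = rate (G.degree e.snd) :=
    fun e he => if_pos (show G.degree e.fst = 3 by rw [he, hd])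
  refine le_trans ?_ (sum_le_sum_of_subset_of_nonneg hsub fun e _ _ => ?_)
  · rw [sum_insert (by rw [mem_insert, mem_singleton]; exact not_or.mpr ⟨h₁, h₂⟩), sum_pair h₃,
      hbase d rfl, hbase _ (E.next_fst d),
      hbase (E.next⁻¹ d) (E.reverse.next_fst d)]
    have := E.cornerGifts_nonneg (E.next d).symm
    have := E.cornerGifts_nonneg (E.next⁻¹ d).symm
    linarith
  · exact add_nonneg (baseGift_nonneg e) (E.cornerGifts_nonneg e)

lemma forty_two_le_inflow (hδ : ∀ v, 3 ≤ G.degree v)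
    (hface : ∀ d : G.Dart, 3 ≤ E.faceSize d) (htri : G.CliqueFree 3)
    (h536 : ∀ u v w : V, G.Adj u v → G.Adj v w → u ≠ w →
      G.degree u ≤ 5 → G.degree v = 3 → 6 < G.degree w)
    (h343 : ∀ u v w : V, G.Adj u v → G.Adj v w → u ≠ w →
      G.degree u = 3 → G.degree v ≤ 4 → G.degree w ≠ 3)
    {v : V} (hv : G.degree v = 3) : 42 ≤ E.inflow v := by
  by_cases hlow : ∃ d : G.Dart, d.fst = v ∧ G.degree d.snd ≤ 5
  · obtain ⟨d, rfl, ha⟩ := hlow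
    have hseven : ∀ e : G.Dart, e.fst = d.fst → e ≠ d → 7 ≤ G.degree e.snd :=
      fun e he hne => h536 d.snd d.fst e.snd d.adj.symm (he ▸ e.adj)
        (fun hs => hne ((Dart.ext_iff _ _).mpr (Prod.ext he hs.symm))) ha hv
    have hb := hseven (E.next d) (E.next_fst d) (E.next_ne_self (by omega))
    have hc := hseven (E.next⁻¹ d) (E.reverse.next_fst d) (E.reverse.next_ne_self (by omega))
    have hin := E.rates_add_cornerGifts_le_inflow hv
    rcases (show G.degree d.snd = 5 ∨ G.degree d.snd ≤ 4 by omega) with h5 | h4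
    · have := eighteen_le_rate hb
      have := eighteen_le_rate hc
      have := E.cornerGifts_nonneg d.symm
      rw [h5, rate_five] at hin
      linarith
    · have := E.bonus_add_bonus_le_cornerGifts hδ hface htri h343 hv h4
      have := twenty_one_le_rate_add hb
      have := twenty_one_le_rate_add hc
      have := rate_nonneg (G.degree d.snd)
      linarith
  · push Not at hlow
    obtain ⟨a, ha⟩ := (G.degree_pos_iff_exists_adj v).mp (by omega)
    let d : G.Dart := ⟨(v, a), ha⟩
    have hin := E.rates_add_cornerGifts_le_inflow (d := d) hv
    have := fourteen_le_rate (hlow d rfl)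
    have := fourteen_le_rate (hlow (E.next d) (E.next_fst d))
    have := fourteen_le_rate (hlow (E.next⁻¹ d) (E.reverse.next_fst d))
    have := E.cornerGifts_nonneg d.symm
    linarith

lemma outflow_eq_zero {w : V} (hw : G.degree w ≤ 4) : E.outflow w = 0 := by
  have hpaid : ∀ E' : PlaneEmbedding G, ∑ d with E'.payer d = w, E'.vertexGift d = 0 := by
    refine fun E' => sum_eq_zero fun d hd => by_contra fun h => ?_
    have := E'.five_le_degree_payer h
    rw [(mem_filter.mp hd).2] at this
    omega
  have hbase : ∑ e : G.Dart with e.fst = w, baseGift e = 0 :=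
    sum_eq_zero fun e he => by
      rw [baseGift, (mem_filter.mp he).2, rate_eq_zero hw, ite_self]
  rw [outflow, hbase, hpaid, hpaid, add_zero, add_zero]

lemma outflow_le {w : V} (hw : 5 ≤ G.degree w) :
    E.outflow w ≤ 42 * ((G.degree w : ℚ) - 4) := by
  set k := #{e : G.Dart | e.fst = w ∧ G.degree e.snd = 3}
  set m := #{e : G.Dart | e.fst = w ∧ G.degree e.snd ≠ 3}
  have hkm : k + m = G.degree w := by
    rw [← dart_fst_fiber_card_eq_degree,
      ← card_filter_add_card_filter_not (p := fun e : G.Dart => G.degree e.snd = 3),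
      filter_filter, filter_filter]
  have hbase : ∑ e : G.Dart with e.fst = w, baseGift e = rate (G.degree w) * k := by
    rw [sum_congr rfl fun e he => by rw [baseGift, (mem_filter.mp he).2], ← sum_filter,
      filter_filter, sum_const, nsmul_eq_mul, mul_comm]
  have h1 := E.sum_vertexGift_le w
  have h2 := E.reverse.sum_vertexGift_le w
  have := rate_mul_add_le hw (show k ≤ G.degree w by omega)
  rw [outflow, hbase]
  have hm : (m : ℚ) = G.degree w - k := by
    rw [← hkm]; push_cast; ring
  rw [hm] at h1 h2
  linarith

lemma outflow_le_charge_add_inflow (hδ : ∀ v, 3 ≤ G.degree v)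
    (hface : ∀ d : G.Dart, 3 ≤ E.faceSize d) (htri : G.CliqueFree 3)
    (h536 : ∀ u v w : V, G.Adj u v → G.Adj v w → u ≠ w →
      G.degree u ≤ 5 → G.degree v = 3 → 6 < G.degree w)
    (h343 : ∀ u v w : V, G.Adj u v → G.Adj v w → u ≠ w →
      G.degree u = 3 → G.degree v ≤ 4 → G.degree w ≠ 3)
    (v : V) : E.outflow v ≤ 42 * ((G.degree v : ℚ) - 4) + E.inflow v := by
  have := E.inflow_nonneg v
  rcases (show G.degree v = 3 ∨ G.degree v = 4 ∨ 5 ≤ G.degree v by have := hδ v; omega)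
    with h | h | h
  · have := E.forty_two_le_inflow hδ hface htri h536 h343 h
    rw [E.outflow_eq_zero (by omega), h]
    push_cast
    linarith
  · rw [E.outflow_eq_zero (by omega), h]
    push_cast
    linarith
  · have := E.outflow_le h
    linarith

end PlaneEmbedding

theorem stmt_16_general {V : Type} [Fintype V] [DecidableEq V] (G : SimpleGraph V)
    [DecidableRel G.Adj]
    (hδ : ∀ v, 3 ≤ G.degree v)
    (E : PlaneEmbedding G) (hE : E.EulerFormula)
    (hface : ∀ d : G.Dart, 3 ≤ E.faceSize d)
    (htri : G.CliqueFree 3) :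
    (∃ v₁ v₂ v₃ : V, G.Adj v₁ v₂ ∧ G.Adj v₂ v₃ ∧ v₁ ≠ v₃ ∧
        G.degree v₁ ≤ 5 ∧ G.degree v₂ = 3 ∧ G.degree v₃ ≤ 6) ∨
    (∃ v₁ v₂ v₃ : V, G.Adj v₁ v₂ ∧ G.Adj v₂ v₃ ∧ v₁ ≠ v₃ ∧
        G.degree v₁ = 3 ∧ G.degree v₂ ≤ 4 ∧ G.degree v₃ = 3) := by
  by_contra hcon
  push Not at hcon
  obtain ⟨h536, h343⟩ := hcon
  have hvertex := sum_le_sum fun v (_ : v ∈ univ) =>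
    E.outflow_le_charge_add_inflow hδ hface htri h536 h343 v
  have hfaces := E.sum_faceGift_le hface htri
  have hflow := E.sum_inflow
  have hcharge := hE.sum_charge
  rw [sum_add_distrib, ← mul_sum] at hvertex
  linarith

/-- A triangle-free normal plane map has a (5⁻,3,6⁻)-path or a (3,4⁻,3)-path. -/
theorem stmt_16 {V : Type} [Fintype V] [DecidableEq V] (G : SimpleGraph V)
    [DecidableRel G.Adj]
    (hconn : G.Connected)
    (hδ : ∀ v, 3 ≤ G.degree v)
    (E : PlaneEmbedding G) (hE : E.EulerFormula)
    (hface : ∀ d : G.Dart, 3 ≤ E.faceSize d)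
    (htri : G.CliqueFree 3) :
    (∃ v₁ v₂ v₃ : V, G.Adj v₁ v₂ ∧ G.Adj v₂ v₃ ∧ v₁ ≠ v₃ ∧
        G.degree v₁ ≤ 5 ∧ G.degree v₂ = 3 ∧ G.degree v₃ ≤ 6) ∨
    (∃ v₁ v₂ v₃ : V, G.Adj v₁ v₂ ∧ G.Adj v₂ v₃ ∧ v₁ ≠ v₃ ∧
        G.degree v₁ = 3 ∧ G.degree v₂ ≤ 4 ∧ G.degree v₃ = 3) :=
  stmt_16_general G hδ E hE hface htri
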